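/- arXiv:2212.11188 — 3 statements merged into one kernel-verified Lean document; each statement's English description precedes it below -/
import Mathlib

section
/- Strong shift equivalence of square nonnegative-integer matrices implies shift equivalence: if A and B are square matrices over ℕ that are strong shift equivalent, then A and B are shift equivalent. -/
/-- Shift equivalence of square ℕ-matrices (possibly of different sizes). -/
def ShiftEquiv {n m : ℕ} (A : Matrix (Fin n) (Fin n) ℕ) (B : Matrix (Fin m) (Fin m) ℕ) : Prop :=
  ∃ ℓ : ℕ, 1 ≤ ℓ ∧ ∃ (R : Matrix (Fin n) (Fin m) ℕ) (S : Matrix (Fin m) (Fin n) ℕ),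
    A ^ ℓ = R * S ∧ B ^ ℓ = S * R ∧ A * R = R * B ∧ B * S = S * A

/-- Elementary strong shift equivalence, as a relation on square ℕ-matrices of arbitrary size. -/
def ElemSSE : (Σ n, Matrix (Fin n) (Fin n) ℕ) → (Σ n, Matrix (Fin n) (Fin n) ℕ) → Prop :=
  fun A B => ∃ (R : Matrix (Fin A.1) (Fin B.1) ℕ) (S : Matrix (Fin B.1) (Fin A.1) ℕ),
    A.2 = R * S ∧ B.2 = S * R

/-- Strong shift equivalence: a finite chain of elementary strong shift equivalences. -/
def StrongShiftEquiv : (Σ n, Matrix (Fin n) (Fin n) ℕ) → (Σ n, Matrix (Fin n) (Fin n) ℕ) → Prop :=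
  Relation.ReflTransGen ElemSSE

lemma shiftEquiv_refl {n : ℕ} (A : Matrix (Fin n) (Fin n) ℕ) : ShiftEquiv A A :=
  ⟨1, le_refl 1, A, 1, by simp, by simp, by simp, by simp⟩

lemma auxpow {n m : ℕ} {A : Matrix (Fin n) (Fin n) ℕ} {B : Matrix (Fin m) (Fin m) ℕ}
    {R : Matrix (Fin n) (Fin m) ℕ} (h : A * R = R * B) (k : ℕ) : A ^ k * R = R * B ^ k := by
  induction k with
  | zero => simp
  | succ k ih =>
    rw [pow_succ, pow_succ, Matrix.mul_assoc, h, ← Matrix.mul_assoc, ih, Matrix.mul_assoc]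

lemma shiftEquiv_trans {n m p : ℕ} {A : Matrix (Fin n) (Fin n) ℕ} {B : Matrix (Fin m) (Fin m) ℕ}
    {C : Matrix (Fin p) (Fin p) ℕ} (h1 : ShiftEquiv A B) (h2 : ShiftEquiv B C) :
    ShiftEquiv A C := by
  obtain ⟨l, hl, R, S, h',  hSR, hAR, hBS⟩ := h1
  obtain ⟨k, hk, T, U, hBT, hUT, hBT2, hCU⟩ := h2
  refine ⟨l + k, by omega, R * T, U * S, ?_, ?_, ?_, ?_⟩
  · have : B ^ k * S = S * A ^ k := auxpow hBS k
    calc A ^ (l + k) = (R * S) * A ^ k := by rw [pow_add, h']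
    _ = R * (B ^ k * S) := by rw [this, Matrix.mul_assoc]
    _ = R * (T * U * S) := by rw [hBT]
    _ = R * T * (U * S) := by simp only [Matrix.mul_assoc]
  · have : B ^ l * T = T * C ^ l := auxpow hBT2 l
    calc C ^ (l + k) = C ^ k * C ^ l := by rw [← pow_add, Nat.add_comm]
    _ = (U * T) * C ^ l := by rw [hUT]
    _ = U * (B ^ l * T) := by rw [this, Matrix.mul_assoc]
    _ = U * (S * R * T) := by rw [hSR]
    _ = U * S * (R * T) := by simp only [Matrix.mul_assoc]
  · calc A * (R * T) = (R * B) * T := by rw [← Matrix.mul_assoc, hAR]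
    _ = R * (T * C) := by rw [Matrix.mul_assoc, hBT2]
    _ = R * T * C := by rw [Matrix.mul_assoc]
  · calc C * (U * S) = (U * B) * S := by rw [← Matrix.mul_assoc, hCU]
    _ = U * (S * A) := by rw [Matrix.mul_assoc, hBS]
    _ = U * S * A := by rw [Matrix.mul_assoc]

lemma elem_se {A B : Σ n, Matrix (Fin n) (Fin n) ℕ} (h : ElemSSE A B) :
    ShiftEquiv A.2 B.2 := by
  obtain ⟨R, S, hA, hB⟩ := h
  exact ⟨1, le_refl 1, R, S, by simpa using hA, by simpa using hB,
    by rw [hA, hB, Matrix.mul_assoc], by rw [hA, hB, Matrix.mul_assoc]⟩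

theorem sse_implies_se (A B : Σ n, Matrix (Fin n) (Fin n) ℕ)
    (h : StrongShiftEquiv A B) : ShiftEquiv A.2 B.2 := by
  induction h with
  | refl => exact shiftEquiv_refl A.2
  | tail _ hbc ih => exact shiftEquiv_trans ih (elem_se hbc)
end

section
/- If square ℕ-matrices A and B are shift equivalent, then the cokernels ℤ^n/(I−A)ℤ^n and ℤ^m/(I−B)ℤ^m are isomorphic as abelian groups (the Bowen–Franks group is a shift equivalence invariant). -/
/-- The Bowen–Franks group of a square ℕ-matrix `A`: the cokernel `ℤⁿ/(I − A)ℤⁿ`. -/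
abbrev BowenFranks {n : ℕ} (A : Matrix (Fin n) (Fin n) ℕ) :=
  (Fin n → ℤ) ⧸ LinearMap.range
    (Matrix.toLin' ((1 : Matrix (Fin n) (Fin n) ℤ) - A.map (Nat.cast : ℕ → ℤ)))

/-- Auxiliary: a power of `M` acts as the identity on `ℤᵏ/(I−M)ℤᵏ`. -/
lemma bf_mk_pow_mulVec {k : ℕ} (M : Matrix (Fin k) (Fin k) ℤ) (ℓ : ℕ) (x : Fin k → ℤ) :
    (Submodule.Quotient.mk ((M ^ ℓ).mulVec x) :
      (Fin k → ℤ) ⧸ LinearMap.range (Matrix.toLin' (1 - M))) = Submodule.Quotient.mk x := by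
  rw [Submodule.Quotient.eq]
  refine ⟨(-(∑ i ∈ Finset.range ℓ, M ^ i)).mulVec x, ?_⟩
  have hgeom : (1 - M) * (-(∑ i ∈ Finset.range ℓ, M ^ i)) = M ^ ℓ - 1 := by
    have h := mul_geom_sum M ℓ
    calc (1 - M) * (-(∑ i ∈ Finset.range ℓ, M ^ i))
        = (M - 1) * (∑ i ∈ Finset.range ℓ, M ^ i) := by
          rw [mul_neg, ← neg_mul, neg_sub]
      _ = M ^ ℓ - 1 := h
  rw [Matrix.toLin'_apply, Matrix.mulVec_mulVec, hgeom, Matrix.sub_mulVec, Matrix.one_mulVec]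

/-- The Bowen–Franks group is an invariant of shift equivalence. -/
theorem bowenFranks_shift_equivalence_invariant {n m : ℕ}
    (A : Matrix (Fin n) (Fin n) ℕ) (B : Matrix (Fin m) (Fin m) ℕ)
    (h : ShiftEquiv A B) : Nonempty (BowenFranks A ≃+ BowenFranks B) := by
  obtain ⟨ℓ, hℓ, R, S, hRS, hSR, hAR, hBS⟩ := h
  set A' : Matrix (Fin n) (Fin n) ℤ := A.map (Nat.cast : ℕ → ℤ) with hA'
  set B' : Matrix (Fin m) (Fin m) ℤ := B.map (Nat.cast : ℕ → ℤ) with hB'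
  set R' : Matrix (Fin n) (Fin m) ℤ := R.map (Nat.cast : ℕ → ℤ) with hR'
  set S' : Matrix (Fin m) (Fin n) ℤ := S.map (Nat.cast : ℕ → ℤ) with hS'
  have castmul : ∀ {a b c : ℕ} (X : Matrix (Fin a) (Fin b) ℕ) (Y : Matrix (Fin b) (Fin c) ℕ),
      (X * Y).map (Nat.cast : ℕ → ℤ) =
        X.map (Nat.cast : ℕ → ℤ) * Y.map (Nat.cast : ℕ → ℤ) := by
    intro a b c X Y
    exact Matrix.map_mul (f := Nat.castRingHom ℤ)
  have hRS' : A' ^ ℓ = R' * S' := by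
    have := map_pow ((Nat.castRingHom ℤ).mapMatrix) A ℓ
    simp only [RingHom.mapMatrix_apply, Nat.coe_castRingHom] at this
    rw [hA', ← this, hRS]
    exact castmul R S
  have hSR' : B' ^ ℓ = S' * R' := by
    have := map_pow ((Nat.castRingHom ℤ).mapMatrix) B ℓ
    simp only [RingHom.mapMatrix_apply, Nat.coe_castRingHom] at this
    rw [hB', ← this, hSR]
    exact castmul S R
  have hAR' : A' * R' = R' * B' := by
    rw [hA', hR', hB', ← castmul, ← castmul, hAR]
  have hBS' : B' * S' = S' * A' := by
    rw [hA', hS', hB', ← castmul, ← castmul, hBS]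
  set KA := LinearMap.range (Matrix.toLin' (1 - A'))
  set KB := LinearMap.range (Matrix.toLin' (1 - B'))
  -- S' carries KA into KB, R' carries KB into KA
  have hS'comm : S' * (1 - A') = (1 - B') * S' := by
    rw [Matrix.mul_sub, Matrix.sub_mul, Matrix.mul_one, Matrix.one_mul, hBS']
  have hR'comm : R' * (1 - B') = (1 - A') * R' := by
    rw [Matrix.mul_sub, Matrix.sub_mul, Matrix.mul_one, Matrix.one_mul, hAR']
  have hf : KA ≤ KB.comap (Matrix.toLin' S') := by
    rintro x ⟨y, rfl⟩
    refine ⟨S'.mulVec y, ?_⟩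
    simp only [Matrix.toLin'_apply, Matrix.mulVec_mulVec, hS'comm]
  have hg : KB ≤ KA.comap (Matrix.toLin' R') := by
    rintro x ⟨y, rfl⟩
    refine ⟨R'.mulVec y, ?_⟩
    simp only [Matrix.toLin'_apply, Matrix.mulVec_mulVec, hR'comm]
  let f : BowenFranks A →ₗ[ℤ] BowenFranks B := KA.mapQ KB (Matrix.toLin' S') hf
  let g : BowenFranks B →ₗ[ℤ] BowenFranks A := KB.mapQ KA (Matrix.toLin' R') hg
  have hgf : g.comp f = LinearMap.id := by
    refine Submodule.linearMap_qext _ (LinearMap.ext fun x => ?_)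
    simp only [LinearMap.comp_apply, Submodule.mkQ_apply, Submodule.mapQ_apply,
      Matrix.toLin'_apply, Matrix.mulVec_mulVec, LinearMap.id_apply, f, g]
    rw [← hRS']
    exact bf_mk_pow_mulVec A' ℓ x
  have hfg : f.comp g = LinearMap.id := by
    refine Submodule.linearMap_qext _ (LinearMap.ext fun x => ?_)
    simp only [LinearMap.comp_apply, Submodule.mkQ_apply, Submodule.mapQ_apply,
      Matrix.toLin'_apply, Matrix.mulVec_mulVec, LinearMap.id_apply, f, g]
    rw [← hSR']
    exact bf_mk_pow_mulVec B' ℓ x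
  exact ⟨(LinearEquiv.ofLinear f g hfg hgf).toAddEquiv⟩
end

section
/- For every k ∈ ℕ₊, the matrices S = [[1,0],[0,1],[0,1]], R₁ = [[2k,0,4k],[k,2k,0]], R₂ = [[2k,2k,2k],[k,k,k]] witness an elementary balanced strong shift equivalence: S·R₁ = A_k where A_k = [[2k,0,4k],[k,2k,0],[k,2k,0]], and R₁·S = R₂·S = [[2k,4k],[k,2k]]. -/
/-- For every positive `k`, the matrices `S`, `R₁`, `R₂` witness an elementary balanced
strong shift equivalence: `S·R₁ = A_k` and `R₁·S = R₂·S = [[2k,4k],[k,2k]]`. -/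
theorem balanced_sse_witness (k : ℕ) (hk : 0 < k) :
    let S : Matrix (Fin 3) (Fin 2) ℕ := !![1, 0; 0, 1; 0, 1]
    let R₁ : Matrix (Fin 2) (Fin 3) ℕ := !![2 * k, 0, 4 * k; k, 2 * k, 0]
    let R₂ : Matrix (Fin 2) (Fin 3) ℕ := !![2 * k, 2 * k, 2 * k; k, k, k]
    let Ak : Matrix (Fin 3) (Fin 3) ℕ := !![2 * k, 0, 4 * k; k, 2 * k, 0; k, 2 * k, 0]
    let C : Matrix (Fin 2) (Fin 2) ℕ := !![2 * k, 4 * k; k, 2 * k]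
    S * R₁ = Ak ∧ R₁ * S = C ∧ R₂ * S = C := by
  refine ⟨?_, ?_, ?_⟩ <;> ext i j <;> fin_cases i <;> fin_cases j <;>
    simp [Matrix.mul_apply, Fin.sum_univ_two, Fin.sum_univ_three, Matrix.vecHead,
      Matrix.vecTail, mul_comm, two_mul] <;> ring
end
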